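/- Let μ₁, μ₂ ∈ (0, 2π), ψ > 0, and let p_{M₁} = μ₁(1,0,0), p_{M₂} = μ₂(cosh ψ, sinh ψ, 0). Define u_R = exp(-p_{M₂}^aJ_a)·exp(-p_{M₁}^aJ_a) ∈ SL(2,ℝ). Then (1/2)tr(u_R) = cos(μ₁/2)cos(μ₂/2) - sin(μ₁/2)sin(μ₂/2)cosh ψ. -/

import Mathlib

/-!
For a unit timelike vector `n`, the generators satisfy `(2 • toM n)² = -1`, so `2 • toM n` behaves
like the imaginary unit and `exp (θ • toM n) = cos (θ/2) + 2 sin (θ/2) • toM n`. The `toM x`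
anticommute up to the Minkowski product, `{toM x, toM y} = -(x·y)/2`, hence `toM x` is traceless
and `tr (toM x * toM y) = -(x·y)/2`. Multiplying out the two exponentials leaves
`cos (μ₁/2) cos (μ₂/2) - sin (μ₁/2) sin (μ₂/2) (n₁·n₂)`, and for the rest-frame vector `(1,0,0)` and
the boosted vector `(cosh ψ, sinh ψ, 0)` one has `n₁·n₂ = cosh ψ`.
-/

open Matrix

noncomputable section

/-- Minkowski metric η = diag(1,-1,-1). -/
def η : Fin 3 → Fin 3 → ℝ := fun a b => if a = b then (if a = 0 then 1 else -1) else 0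

/-- Totally antisymmetric tensor with ε 0 1 2 = 1. -/
def ε : Fin 3 → Fin 3 → Fin 3 → ℝ := fun a b c =>
  (((b : ℕ) : ℝ) - ((a : ℕ) : ℝ)) * (((c : ℕ) : ℝ) - ((a : ℕ) : ℝ)) *
    (((c : ℕ) : ℝ) - ((b : ℕ) : ℝ)) / 2

/-- The sl(2,ℝ) generators. -/
def J : Fin 3 → Matrix (Fin 2) (Fin 2) ℝ :=
  ![(1/2 : ℝ) • !![0, 1; -1, 0], (1/2 : ℝ) • !![1, 0; 0, -1], (1/2 : ℝ) • !![0, 1; 1, 0]]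

/-- Minkowski inner product p·q = η_{ab} p^a q^b. -/
def ip (p q : Fin 3 → ℝ) : ℝ := ∑ a, ∑ b, η a b * p a * q b

/-- The sl(2,ℝ) element x^a J_a associated to x ∈ ℝ³. -/
def toM (x : Fin 3 → ℝ) : Matrix (Fin 2) (Fin 2) ℝ := ∑ a, x a • J a

theorem NormedSpace.exp_smul_of_mul_self_eq_neg_one {A : Type*} [NormedRing A]
    [NormedAlgebra ℝ A] [Algebra ℚ A] {B : A} (hB : B * B = -1) (θ : ℝ) :
    NormedSpace.exp (θ • B) = Real.cos θ • (1 : A) + Real.sin θ • B := by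
  -- `B` spans a copy of `ℂ` inside `A`, with `B` playing the role of `I`.
  let f : ℂ →ₐ[ℝ] A := Complex.liftAux B hB
  have hf : Continuous f := f.toLinearMap.continuous_of_finiteDimensional
  have hθ : f (θ * Complex.I) = θ • B := by simp [f, Complex.liftAux_apply]
  rw [← hθ, ← NormedSpace.map_exp f hf, ← Complex.exp_eq_exp_ℂ, Complex.exp_mul_I]
  simp [f, Complex.liftAux_apply, Algebra.algebraMap_eq_smul_one, Complex.cos_ofReal_re,
    Complex.sin_ofReal_re]

/- Matrices carry no global norm; the ℓ∞ operator norm is used only to invoke the normed-algebra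
lemma, and it induces the usual topology, so the resulting `exp` is the standard one. -/
attribute [local instance] Matrix.linftyOpNormedRing Matrix.linftyOpNormedAlgebra in
theorem Matrix.exp_smul_of_mul_self_eq_neg_one {n : Type*} [Fintype n] [DecidableEq n]
    {B : Matrix n n ℝ} (hB : B * B = -1) (θ : ℝ) :
    NormedSpace.exp (θ • B) = Real.cos θ • (1 : Matrix n n ℝ) + Real.sin θ • B :=
  NormedSpace.exp_smul_of_mul_self_eq_neg_one hB θ

theorem toM_smul (c : ℝ) (x : Fin 3 → ℝ) : toM (c • x) = c • toM x := by
  simp [toM, Finset.smul_sum, smul_smul]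

theorem toM_mul_toM_add_toM_mul_toM (x y : Fin 3 → ℝ) :
    toM x * toM y + toM y * toM x = -(ip x y / 2) • (1 : Matrix (Fin 2) (Fin 2) ℝ) := by
  ext i j
  fin_cases i <;> fin_cases j <;>
    simp [toM, _root_.J, ip, η, Fin.sum_univ_three] <;> ring

theorem trace_toM (x : Fin 3 → ℝ) : (toM x).trace = 0 := by
  simp [toM, _root_.J, trace, Fin.sum_univ_three, Fin.sum_univ_two]

theorem trace_toM_mul_toM (x y : Fin 3 → ℝ) : (toM x * toM y).trace = -(ip x y / 2) := by
  have h := congrArg trace (toM_mul_toM_add_toM_mul_toM x y)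
  rw [trace_add, trace_mul_comm (toM y), trace_smul, trace_one] at h
  simp only [Fintype.card_fin, Nat.cast_ofNat, smul_eq_mul] at h
  linarith

theorem toM_mul_self (x : Fin 3 → ℝ) :
    toM x * toM x = -(ip x x / 4) • (1 : Matrix (Fin 2) (Fin 2) ℝ) := by
  have h := toM_mul_toM_add_toM_mul_toM x x
  rw [← two_smul ℝ] at h
  calc toM x * toM x = (1 / 2 : ℝ) • (2 : ℝ) • (toM x * toM x) := by
        rw [smul_smul]; norm_num
    _ = -(ip x x / 4) • 1 := by rw [h, smul_smul]; ring_nf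

theorem exp_neg_toM_smul {n : Fin 3 → ℝ} (hn : ip n n = 1) (θ : ℝ) :
    NormedSpace.exp (-toM (θ • n))
      = Real.cos (θ / 2) • (1 : Matrix (Fin 2) (Fin 2) ℝ) - (2 * Real.sin (θ / 2)) • toM n := by
  have hB : ((2 : ℝ) • toM n) * ((2 : ℝ) • toM n) = -1 := by
    rw [smul_mul_smul, toM_mul_self, hn, smul_smul]; norm_num
  have hθ : -toM (θ • n) = (-(θ / 2)) • ((2 : ℝ) • toM n) := by
    rw [toM_smul, smul_smul, ← neg_smul]; ring_nf
  rw [hθ, Matrix.exp_smul_of_mul_self_eq_neg_one hB, Real.cos_neg, Real.sin_neg, smul_smul,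
    sub_eq_add_neg, ← neg_smul]
  congr 2
  ring

theorem half_trace_exp_neg_toM_mul_exp_neg_toM {n m : Fin 3 → ℝ} (hn : ip n n = 1)
    (hm : ip m m = 1) (α β : ℝ) :
    (1 / 2) * (NormedSpace.exp (-toM (β • m)) * NormedSpace.exp (-toM (α • n))).trace
      = Real.cos (α / 2) * Real.cos (β / 2) - Real.sin (α / 2) * Real.sin (β / 2) * ip m n := by
  rw [exp_neg_toM_smul hn, exp_neg_toM_smul hm]
  simp only [mul_sub, sub_mul, smul_mul_smul, one_mul, mul_one, trace_sub, trace_smul,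
    trace_one, trace_toM, trace_toM_mul_toM, Fintype.card_fin, smul_eq_mul]
  ring

theorem stmt19_general (μ₁ μ₂ ψ : ℝ) :
    (1/2) * (NormedSpace.exp (-(toM (μ₂ • ![Real.cosh ψ, Real.sinh ψ, 0])))
        * NormedSpace.exp (-(toM (μ₁ • ![1, 0, 0])))).trace
      = Real.cos (μ₁/2) * Real.cos (μ₂/2)
        - Real.sin (μ₁/2) * Real.sin (μ₂/2) * Real.cosh ψ := by
  have ip_boost : ip ![Real.cosh ψ, Real.sinh ψ, 0] ![Real.cosh ψ, Real.sinh ψ, 0] = 1 := by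
    simp [ip, η, Fin.sum_univ_three]
    linear_combination Real.cosh_sq_sub_sinh_sq ψ
  have ip_rest : ip ![1, 0, 0] ![1, 0, 0] = 1 := by simp [ip, η, Fin.sum_univ_three]
  rw [half_trace_exp_neg_toM_mul_exp_neg_toM ip_rest ip_boost]
  simp [ip, η, Fin.sum_univ_three]

theorem stmt19 (μ₁ μ₂ ψ : ℝ) (h₁ : μ₁ ∈ Set.Ioo 0 (2 * Real.pi))
    (h₂ : μ₂ ∈ Set.Ioo 0 (2 * Real.pi)) (hψ : 0 < ψ) :
    (1/2) * (NormedSpace.exp (-(toM (μ₂ • ![Real.cosh ψ, Real.sinh ψ, 0])))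
        * NormedSpace.exp (-(toM (μ₁ • ![1, 0, 0])))).trace
      = Real.cos (μ₁/2) * Real.cos (μ₂/2)
        - Real.sin (μ₁/2) * Real.sin (μ₂/2) * Real.cosh ψ :=
  stmt19_general μ₁ μ₂ ψ
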